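/- arXiv:2505.09340 — 3 statements merged into one kernel-verified Lean document; each statement's English description precedes it below -/
import Mathlib

section
/- Let $\eta, T > 0$, $\psi(x) = e^{-|x|^2/(8\eta T)}$ and $W(x) = (\cos x_2, \cos x_3, \cos x_1)$. Then $\operatorname{curl}(\psi W)(0) = 0$, and the Jacobian matrix of $\operatorname{curl}(\psi W)$ at the origin equals $\frac{1}{4\eta T}\begin{pmatrix} 0 & -1 & 4\eta T + 1 \\ 4\eta T + 1 & 0 & -1 \\ -1 & 4\eta T + 1 & 0\end{pmatrix}$, whose determinant is $1 + \frac{3}{4\eta T} + \frac{3}{(4\eta T)^2} \neq 0$. -/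
noncomputable section

abbrev V3 := Fin 3 → ℝ

def pd (j : Fin 3) (f : V3 → ℝ) : V3 → ℝ := fun x => fderiv ℝ f x (Pi.single j 1)

def curl3 (v : V3 → V3) : V3 → V3 := fun x =>
  ![pd 1 (fun y => v y 2) x - pd 2 (fun y => v y 1) x,
    pd 2 (fun y => v y 0) x - pd 0 (fun y => v y 2) x,
    pd 0 (fun y => v y 1) x - pd 1 (fun y => v y 0) x]

open Real ContinuousLinearMap

def pr (i : Fin 3) : V3 →L[ℝ] ℝ := ContinuousLinearMap.proj i

lemma hproj (i : Fin 3) (x : V3) : HasFDerivAt (fun y : V3 => y i) (pr i) x :=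
  (pr i).hasFDerivAt

lemma hS (x : V3) : HasFDerivAt (fun y : V3 => ∑ i, y i ^ 2)
    (∑ i, (x i • pr i + x i • pr i)) x := by
  have : (fun y : V3 => ∑ i, y i ^ 2) = fun y : V3 => ∑ i, y i * y i := by
    funext y; simp [pow_two]
  rw [this]
  exact HasFDerivAt.fun_sum fun i _ => (hproj i x).fun_mul (hproj i x)

lemma hpsi (c : ℝ) (x : V3) : HasFDerivAt (fun y : V3 => Real.exp (-(∑ i, y i ^ 2) / c))
    (Real.exp (-(∑ i, x i ^ 2) / c) • ((-c⁻¹) • (∑ i, (x i • pr i + x i • pr i)))) x := by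
  have h : (fun y : V3 => Real.exp (-(∑ i, y i ^ 2) / c))
      = fun y : V3 => Real.exp ((-c⁻¹) * ∑ i, y i ^ 2) := by
    funext y; congr 1; ring
  have h2 : -(∑ i, x i ^ 2) / c = (-c⁻¹) * ∑ i, x i ^ 2 := by ring
  rw [h, h2]
  exact (((hS x).const_mul (-c⁻¹)).exp)

lemma pd_F (c : ℝ) (k j : Fin 3) (x : V3) :
    pd j (fun y : V3 => Real.exp (-(∑ i, y i ^ 2) / c) * Real.cos (y k)) x
      = Real.exp (-(∑ i, x i ^ 2) / c) *
          (-(Real.sin (x k) * (Pi.single j 1 : V3) k) - Real.cos (x k) * (2 * x j) * c⁻¹) := by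
  rw [pd, ((hpsi c x).fun_mul ((hproj k x).cos)).fderiv]
  simp [pr, Pi.single_apply, ite_mul, zero_mul, Finset.sum_ite_eq', mul_comm, mul_assoc]
  have hsum : ∑ i : Fin 3, ((if i = j then x i else 0) + if i = j then x i else 0) = x j + x j := by
    rw [Finset.sum_add_distrib]; simp
  rw [hsum]
  by_cases h : k = j <;> simp [h] <;> ring

lemma pd_sub_G (c : ℝ) (k1 j1 k2 j2 m : Fin 3) (s1 s2 : ℝ) :
    pd m (fun x : V3 =>
        Real.exp (-(∑ i, x i ^ 2) / c) * (-(Real.sin (x k1) * s1) - Real.cos (x k1) * (2 * x j1) * c⁻¹)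
      - Real.exp (-(∑ i, x i ^ 2) / c) * (-(Real.sin (x k2) * s2) - Real.cos (x k2) * (2 * x j2) * c⁻¹)) 0
    = (-(s1 * (Pi.single m 1 : V3) k1) - 2 * c⁻¹ * (Pi.single m 1 : V3) j1)
      - (-(s2 * (Pi.single m 1 : V3) k2) - 2 * c⁻¹ * (Pi.single m 1 : V3) j2) := by
  have h1 := (hpsi c 0).fun_mul
    ((((hproj k1 (0:V3)).sin.mul_const s1).fun_neg).fun_sub
      (((hproj k1 (0:V3)).cos.fun_mul ((hproj j1 (0:V3)).const_mul 2)).mul_const c⁻¹))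
  have h2 := (hpsi c 0).fun_mul
    ((((hproj k2 (0:V3)).sin.mul_const s2).fun_neg).fun_sub
      (((hproj k2 (0:V3)).cos.fun_mul ((hproj j2 (0:V3)).const_mul 2)).mul_const c⁻¹))
  rw [pd, (h1.fun_sub h2).fderiv]
  simp [pr, Pi.single_apply]
  split_ifs <;> ring

theorem jacobian_of_curl_psiW (η T : ℝ) (hη : 0 < η) (hT : 0 < T)
    (ψ : V3 → ℝ) (hψ : ψ = fun x => Real.exp (-(∑ i, x i ^ 2) / (8 * η * T)))
    (W : V3 → V3)
    (hW : W = fun x => ![Real.cos (x 1), Real.cos (x 2), Real.cos (x 0)])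
    (A : Matrix (Fin 3) (Fin 3) ℝ)
    (hA : A = (1 / (4 * η * T)) •
      !![0, -1, 4 * η * T + 1;
         4 * η * T + 1, 0, -1;
         -1, 4 * η * T + 1, 0]) :
    curl3 (fun x i => ψ x * W x i) 0 = 0 ∧
    (∀ i j, pd j (fun x => curl3 (fun y k => ψ y * W y k) x i) 0 = A i j) ∧
    A.det = 1 + 3 / (4 * η * T) + 3 / (4 * η * T) ^ 2 ∧
    A.det ≠ 0 := by
  subst hψ hW hA
  set c : ℝ := 8 * η * T with hc
  have h4 : (4 : ℝ) * η * T ≠ 0 := by positivity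
  have e0 : (fun x : V3 => curl3 (fun y k => Real.exp (-(∑ i, y i ^ 2) / c) * ![Real.cos (y 1), Real.cos (y 2), Real.cos (y 0)] k) x 0)
      = fun x : V3 =>
        Real.exp (-(∑ i, x i ^ 2) / c) * (-(Real.sin (x 0) * (Pi.single 1 1 : V3) 0) - Real.cos (x 0) * (2 * x 1) * c⁻¹)
      - Real.exp (-(∑ i, x i ^ 2) / c) * (-(Real.sin (x 2) * (Pi.single 2 1 : V3) 2) - Real.cos (x 2) * (2 * x 2) * c⁻¹) := by
    funext x
    simp only [curl3, Matrix.cons_val_zero, Matrix.cons_val_one, Matrix.cons_val_two,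
      Matrix.head_cons, Matrix.tail_cons]
    rw [pd_F, pd_F]
  have e1 : (fun x : V3 => curl3 (fun y k => Real.exp (-(∑ i, y i ^ 2) / c) * ![Real.cos (y 1), Real.cos (y 2), Real.cos (y 0)] k) x 1)
      = fun x : V3 =>
        Real.exp (-(∑ i, x i ^ 2) / c) * (-(Real.sin (x 1) * (Pi.single 2 1 : V3) 1) - Real.cos (x 1) * (2 * x 2) * c⁻¹)
      - Real.exp (-(∑ i, x i ^ 2) / c) * (-(Real.sin (x 0) * (Pi.single 0 1 : V3) 0) - Real.cos (x 0) * (2 * x 0) * c⁻¹) := by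
    funext x
    simp only [curl3, Matrix.cons_val_zero, Matrix.cons_val_one, Matrix.cons_val_two,
      Matrix.head_cons, Matrix.tail_cons]
    rw [pd_F, pd_F]
  have e2 : (fun x : V3 => curl3 (fun y k => Real.exp (-(∑ i, y i ^ 2) / c) * ![Real.cos (y 1), Real.cos (y 2), Real.cos (y 0)] k) x 2)
      = fun x : V3 =>
        Real.exp (-(∑ i, x i ^ 2) / c) * (-(Real.sin (x 2) * (Pi.single 0 1 : V3) 2) - Real.cos (x 2) * (2 * x 0) * c⁻¹)
      - Real.exp (-(∑ i, x i ^ 2) / c) * (-(Real.sin (x 1) * (Pi.single 1 1 : V3) 1) - Real.cos (x 1) * (2 * x 1) * c⁻¹) := by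
    funext x
    simp only [curl3, Matrix.cons_val_zero, Matrix.cons_val_one, Matrix.cons_val_two,
      Matrix.head_cons, Matrix.tail_cons]
    rw [pd_F, pd_F]
  refine ⟨?_, ?_, ?_, ?_⟩
  · funext i
    fin_cases i
    · show curl3 (fun y k => Real.exp (-(∑ i, y i ^ 2) / c) * ![Real.cos (y 1), Real.cos (y 2), Real.cos (y 0)] k) 0 0 = (0 : V3) 0
      simpa using congrFun e0 0
    · show curl3 (fun y k => Real.exp (-(∑ i, y i ^ 2) / c) * ![Real.cos (y 1), Real.cos (y 2), Real.cos (y 0)] k) 0 1 = (0 : V3) 1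
      simpa using congrFun e1 0
    · show curl3 (fun y k => Real.exp (-(∑ i, y i ^ 2) / c) * ![Real.cos (y 1), Real.cos (y 2), Real.cos (y 0)] k) 0 2 = (0 : V3) 2
      simpa using congrFun e2 0
  · intro i j
    fin_cases i <;> fin_cases j
    · show pd 0 (fun x => curl3 (fun y k => Real.exp (-(∑ i, y i ^ 2) / c) * ![Real.cos (y 1), Real.cos (y 2), Real.cos (y 0)] k) x 0) 0
          = ((1 / (4 * η * T)) • !![0, -1, 4 * η * T + 1; 4 * η * T + 1, 0, -1; -1, 4 * η * T + 1, 0] : Matrix (Fin 3) (Fin 3) ℝ) 0 0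
      rw [e0, pd_sub_G]
      norm_num [hc, Pi.single_apply, Matrix.smul_apply, Fin.ext_iff]
      try field_simp
      try ring
    · show pd 1 (fun x => curl3 (fun y k => Real.exp (-(∑ i, y i ^ 2) / c) * ![Real.cos (y 1), Real.cos (y 2), Real.cos (y 0)] k) x 0) 0
          = ((1 / (4 * η * T)) • !![0, -1, 4 * η * T + 1; 4 * η * T + 1, 0, -1; -1, 4 * η * T + 1, 0] : Matrix (Fin 3) (Fin 3) ℝ) 0 1
      rw [e0, pd_sub_G]
      norm_num [hc, Pi.single_apply, Matrix.smul_apply, Fin.ext_iff]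
      try field_simp
      try ring
    · show pd 2 (fun x => curl3 (fun y k => Real.exp (-(∑ i, y i ^ 2) / c) * ![Real.cos (y 1), Real.cos (y 2), Real.cos (y 0)] k) x 0) 0
          = ((1 / (4 * η * T)) • !![0, -1, 4 * η * T + 1; 4 * η * T + 1, 0, -1; -1, 4 * η * T + 1, 0] : Matrix (Fin 3) (Fin 3) ℝ) 0 2
      rw [e0, pd_sub_G]
      norm_num [hc, Pi.single_apply, Matrix.smul_apply, Fin.ext_iff, Matrix.cons_val_two, Matrix.tail_cons, Matrix.head_cons]
      try field_simp
      try ring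
    · show pd 0 (fun x => curl3 (fun y k => Real.exp (-(∑ i, y i ^ 2) / c) * ![Real.cos (y 1), Real.cos (y 2), Real.cos (y 0)] k) x 1) 0
          = ((1 / (4 * η * T)) • !![0, -1, 4 * η * T + 1; 4 * η * T + 1, 0, -1; -1, 4 * η * T + 1, 0] : Matrix (Fin 3) (Fin 3) ℝ) 1 0
      rw [e1, pd_sub_G]
      norm_num [hc, Pi.single_apply, Matrix.smul_apply, Fin.ext_iff]
      try field_simp
      try ring
    · show pd 1 (fun x => curl3 (fun y k => Real.exp (-(∑ i, y i ^ 2) / c) * ![Real.cos (y 1), Real.cos (y 2), Real.cos (y 0)] k) x 1) 0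
          = ((1 / (4 * η * T)) • !![0, -1, 4 * η * T + 1; 4 * η * T + 1, 0, -1; -1, 4 * η * T + 1, 0] : Matrix (Fin 3) (Fin 3) ℝ) 1 1
      rw [e1, pd_sub_G]
      norm_num [hc, Pi.single_apply, Matrix.smul_apply, Fin.ext_iff]
      try field_simp
      try ring
    · show pd 2 (fun x => curl3 (fun y k => Real.exp (-(∑ i, y i ^ 2) / c) * ![Real.cos (y 1), Real.cos (y 2), Real.cos (y 0)] k) x 1) 0
          = ((1 / (4 * η * T)) • !![0, -1, 4 * η * T + 1; 4 * η * T + 1, 0, -1; -1, 4 * η * T + 1, 0] : Matrix (Fin 3) (Fin 3) ℝ) 1 2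
      rw [e1, pd_sub_G]
      norm_num [hc, Pi.single_apply, Matrix.smul_apply, Fin.ext_iff, Matrix.cons_val_two, Matrix.tail_cons, Matrix.head_cons]
      try field_simp
      try ring
    · show pd 0 (fun x => curl3 (fun y k => Real.exp (-(∑ i, y i ^ 2) / c) * ![Real.cos (y 1), Real.cos (y 2), Real.cos (y 0)] k) x 2) 0
          = ((1 / (4 * η * T)) • !![0, -1, 4 * η * T + 1; 4 * η * T + 1, 0, -1; -1, 4 * η * T + 1, 0] : Matrix (Fin 3) (Fin 3) ℝ) 2 0
      rw [e2, pd_sub_G]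
      norm_num [hc, Pi.single_apply, Matrix.smul_apply, Fin.ext_iff, Matrix.cons_val_two, Matrix.tail_cons, Matrix.head_cons]
      try field_simp
      try ring
    · show pd 1 (fun x => curl3 (fun y k => Real.exp (-(∑ i, y i ^ 2) / c) * ![Real.cos (y 1), Real.cos (y 2), Real.cos (y 0)] k) x 2) 0
          = ((1 / (4 * η * T)) • !![0, -1, 4 * η * T + 1; 4 * η * T + 1, 0, -1; -1, 4 * η * T + 1, 0] : Matrix (Fin 3) (Fin 3) ℝ) 2 1
      rw [e2, pd_sub_G]
      norm_num [hc, Pi.single_apply, Matrix.smul_apply, Fin.ext_iff, Matrix.cons_val_two, Matrix.tail_cons, Matrix.head_cons]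
      try field_simp
      try ring
    · show pd 2 (fun x => curl3 (fun y k => Real.exp (-(∑ i, y i ^ 2) / c) * ![Real.cos (y 1), Real.cos (y 2), Real.cos (y 0)] k) x 2) 0
          = ((1 / (4 * η * T)) • !![0, -1, 4 * η * T + 1; 4 * η * T + 1, 0, -1; -1, 4 * η * T + 1, 0] : Matrix (Fin 3) (Fin 3) ℝ) 2 2
      rw [e2, pd_sub_G]
      norm_num [hc, Pi.single_apply, Matrix.smul_apply, Fin.ext_iff, Matrix.cons_val_two, Matrix.tail_cons, Matrix.head_cons]
      try field_simp
      try ring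
  · simp only [Matrix.det_fin_three, Matrix.smul_apply, Matrix.cons_val', Matrix.cons_val_zero,
      Matrix.cons_val_one, Matrix.head_cons, Matrix.head_fin_const, Matrix.cons_val_fin_one,
      Matrix.empty_val', smul_eq_mul, Matrix.of_apply, Matrix.cons_val_two, Matrix.tail_cons]
    field_simp
    ring
  · have hpos : (0:ℝ) < 1 + 3 / (4 * η * T) + 3 / (4 * η * T) ^ 2 := by positivity
    have hdet : ((1 / (4 * η * T)) • !![0, -1, 4 * η * T + 1; 4 * η * T + 1, 0, -1; -1, 4 * η * T + 1, 0] : Matrix (Fin 3) (Fin 3) ℝ).det = 1 + 3 / (4 * η * T) + 3 / (4 * η * T) ^ 2 := by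
      simp only [Matrix.det_fin_three, Matrix.smul_apply, Matrix.cons_val', Matrix.cons_val_zero,
        Matrix.cons_val_one, Matrix.head_cons, Matrix.head_fin_const, Matrix.cons_val_fin_one,
        Matrix.empty_val', smul_eq_mul, Matrix.of_apply, Matrix.cons_val_two, Matrix.tail_cons]
      field_simp
      ring
    rw [hdet]
    linarith

end
end

section
/- Let $\eta, T > 0$ and let $A = \frac{1}{4\eta T}\begin{pmatrix} 0 & -1 & 4\eta T + 1 \\ 4\eta T + 1 & 0 & -1 \\ -1 & 4\eta T + 1 & 0\end{pmatrix}$. Then the eigenvalues of $A$ are $\lambda_1 = 1$, $\lambda_2 = -\frac{1}{2} + i\frac{\sqrt3}{2}\sqrt{1 + \frac{1}{\eta T} + \frac{1}{4(\eta T)^2}}$, and $\lambda_3 = \overline{\lambda_2}$; in particular no eigenvalue of $A$ has zero real part. -/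
noncomputable section

open Complex

theorem eigenvalues_of_jacobian (η T : ℝ) (hη : 0 < η) (hT : 0 < T)
    (A : Matrix (Fin 3) (Fin 3) ℂ)
    (hA : A = (((1 / (4 * η * T) : ℝ)) : ℂ) •
      (!![0, -1, ((4 * η * T + 1 : ℝ) : ℂ);
         ((4 * η * T + 1 : ℝ) : ℂ), 0, -1;
         -1, ((4 * η * T + 1 : ℝ) : ℂ), 0] : Matrix (Fin 3) (Fin 3) ℂ))
    (lam₁ lam₂ lam₃ : ℂ)
    (h₁ : lam₁ = 1)
    (h₂ : lam₂ = -(1/2) + Complex.I * ((Real.sqrt 3 / 2) *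
      Real.sqrt (1 + 1 / (η * T) + 1 / (4 * (η * T) ^ 2)) : ℝ))
    (h₃ : lam₃ = starRingEnd ℂ lam₂) :
    spectrum ℂ A = {lam₁, lam₂, lam₃} ∧
    ∀ μ ∈ spectrum ℂ A, μ.re ≠ 0 := by
  have hd : (0:ℝ) < 4 * η * T := by positivity
  have hsq : Real.sqrt (1 + 1 / (η * T) + 1 / (4 * (η * T) ^ 2))
      = (4*η*T+2)/(4*η*T) := by
    rw [show (1 + 1 / (η * T) + 1 / (4 * (η * T) ^ 2)) = ((4*η*T+2)/(4*η*T))^2 by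
      field_simp; ring]
    exact Real.sqrt_sq (by positivity)
  rw [hsq] at h₂
  set s : ℝ := Real.sqrt 3 with hs
  have hs3 : ((s:ℂ) * Complex.I)^2 = -3 := by
    rw [mul_pow, Complex.I_sq, hs]
    norm_cast
    rw [Real.sq_sqrt (by norm_num : (3:ℝ) ≥ 0)]
    norm_num
  have hηT : ((η:ℂ) ≠ 0) := Complex.ofReal_ne_zero.mpr hη.ne'
  have hTc : ((T:ℂ) ≠ 0) := Complex.ofReal_ne_zero.mpr hT.ne'
  -- rewrite lam₂, lam₃ in a convenient form
  have h₂' : lam₂ = -(1/2) + ((s:ℂ) * Complex.I) *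
      ((4*(η:ℂ)*(T:ℂ)+2)/(2*(4*(η:ℂ)*(T:ℂ)))) := by
    rw [h₂]; push_cast; ring
  have h₃' : lam₃ = -(1/2) - ((s:ℂ) * Complex.I) *
      ((4*(η:ℂ)*(T:ℂ)+2)/(2*(4*(η:ℂ)*(T:ℂ)))) := by
    rw [h₃, h₂]
    simp only [map_add, map_mul, map_neg, map_div₀, map_ofNat, map_one,
      Complex.conj_I, Complex.conj_ofReal]
    push_cast
    ring
  -- product of the complex pair
  have hprod : ∀ μ : ℂ, (μ - lam₂) * (μ - lam₃)
      = μ^2 + μ + (1/4 + 3 * ((4*(η:ℂ)*(T:ℂ)+2)/(2*(4*(η:ℂ)*(T:ℂ))))^2) := by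
    intro μ
    rw [h₂', h₃']
    linear_combination (-(((4*(η:ℂ)*(T:ℂ)+2)/(2*(4*(η:ℂ)*(T:ℂ))))^2)) * hs3
  -- membership characterization
  have key : ∀ μ : ℂ, μ ∈ spectrum ℂ A ↔
      (μ • (1:Matrix (Fin 3) (Fin 3) ℂ) - A).det = 0 := by
    intro μ
    rw [spectrum.mem_iff, Matrix.isUnit_iff_isUnit_det, isUnit_iff_ne_zero, not_not,
      Algebra.algebraMap_eq_smul_one]
  have hdet : ∀ μ : ℂ, (μ • (1:Matrix (Fin 3) (Fin 3) ℂ) - A).det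
      = (μ - lam₁) * (μ - lam₂) * (μ - lam₃) := by
    intro μ
    rw [hA, Matrix.det_fin_three]
    simp [Matrix.sub_apply, Matrix.smul_apply, Matrix.one_apply]
    rw [h₁, show (μ - 1) * (μ - lam₂) * (μ - lam₃)
      = (μ - 1) * ((μ - lam₂) * (μ - lam₃)) from mul_assoc _ _ _, hprod μ]
    push_cast
    have hT' : (T:ℂ) * (T:ℂ)⁻¹ = 1 := mul_inv_cancel₀ hTc
    have hη' : (η:ℂ) * (η:ℂ)⁻¹ = 1 := mul_inv_cancel₀ hηT
    set d : ℂ := 4*(η:ℂ)*(T:ℂ) with hdd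
    set e : ℂ := 4⁻¹*((η:ℂ))⁻¹*((T:ℂ))⁻¹ with hee
    linear_combination ((-(3/4)*μ*(1+d*e) - d^2*e^2 - (1/4+3*e)*(d*e) - 3*e^2 - 1/4)
        * (η:ℂ) * ((η:ℂ))⁻¹) * hT'
      + (-(3/4)*μ*(1+d*e) - d^2*e^2 - (1/4+3*e)*(d*e) - 3*e^2 - 1/4) * hη'
  constructor
  · ext μ
    rw [key μ, hdet μ]
    simp only [mul_eq_zero, sub_eq_zero, Set.mem_insert_iff, Set.mem_singleton_iff]
    tauto
  · intro μ hμ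
    rw [key μ, hdet μ] at hμ
    have hre2 : lam₂.re = -(1/2) := by
      rw [h₂]
      simp only [Complex.add_re, Complex.neg_re, Complex.mul_re, Complex.I_re,
        Complex.I_im, Complex.ofReal_re, Complex.ofReal_im]
      norm_num
    have hre3 : lam₃.re = -(1/2) := by rw [h₃, Complex.conj_re, hre2]
    simp only [mul_eq_zero, sub_eq_zero] at hμ
    rcases hμ with (h | h) | h
    · rw [h, h₁]; norm_num
    · rw [h, hre2]; norm_num
    · rw [h, hre3]; norm_num

end
end

section
/- Let $\alpha \ge 3/2$, $\phi(x) = (1+|x|^2)^{-\alpha}$ and $B_N(x) = (\sin(Nx_3), \cos(Nx_3), 0)$. If $N > 2\alpha$, then for every $x \in \mathbb{R}^3$, $|\operatorname{curl}(\phi B_N)(x)| \ge \frac{N - 2\alpha}{(1+|x|^2)^\alpha} > 0$; in particular the vector field $\operatorname{curl}(\phi B_N)$ has no zeros. -/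
set_option maxHeartbeats 8000000

noncomputable section

private abbrev pr3 (i : Fin 3) : (Fin 3 → ℝ) →L[ℝ] ℝ := ContinuousLinearMap.proj i

private lemma norm3_lower (a b c p q r : ℝ) :
    Real.sqrt (a^2+b^2+c^2) - Real.sqrt (p^2+q^2+r^2) ≤
      Real.sqrt ((a+p)^2+(b+q)^2+(c+r)^2) := by
  have hA : (0:ℝ) ≤ a^2+b^2+c^2 := by positivity
  have hB : (0:ℝ) ≤ p^2+q^2+r^2 := by positivity
  have hdot : -(a*p+b*q+c*r) ≤ Real.sqrt (a^2+b^2+c^2) * Real.sqrt (p^2+q^2+r^2) := by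
    rw [← Real.sqrt_mul hA]
    have h1 : (a*p+b*q+c*r)^2 ≤ (a^2+b^2+c^2)*(p^2+q^2+r^2) := by
      nlinarith [sq_nonneg (a*q-b*p), sq_nonneg (a*r-c*p), sq_nonneg (b*r-c*q)]
    calc -(a*p+b*q+c*r) ≤ |a*p+b*q+c*r| := neg_le_abs _
      _ = Real.sqrt ((a*p+b*q+c*r)^2) := (Real.sqrt_sq_eq_abs _).symm
      _ ≤ _ := Real.sqrt_le_sqrt h1
  have hA' : Real.sqrt (a^2+b^2+c^2) ^ 2 = a^2+b^2+c^2 := Real.sq_sqrt hA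
  have hB' : Real.sqrt (p^2+q^2+r^2) ^ 2 = p^2+q^2+r^2 := Real.sq_sqrt hB
  have key : (Real.sqrt (a^2+b^2+c^2) - Real.sqrt (p^2+q^2+r^2))^2
      ≤ (a+p)^2+(b+q)^2+(c+r)^2 := by nlinarith [hdot]
  calc Real.sqrt (a^2+b^2+c^2) - Real.sqrt (p^2+q^2+r^2)
      ≤ |Real.sqrt (a^2+b^2+c^2) - Real.sqrt (p^2+q^2+r^2)| := le_abs_self _
    _ = Real.sqrt ((Real.sqrt (a^2+b^2+c^2) - Real.sqrt (p^2+q^2+r^2))^2) :=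
        (Real.sqrt_sq_eq_abs _).symm
    _ ≤ _ := Real.sqrt_le_sqrt key

theorem curl_phi_BN_no_zeros (α N : ℝ) (hα : 3 / 2 ≤ α) (hN : 2 * α < N)
    (φ : V3 → ℝ) (hφ : φ = fun x => (1 + ∑ i, x i ^ 2) ^ (-α))
    (BN : V3 → V3)
    (hBN : BN = fun x => ![Real.sin (N * x 2), Real.cos (N * x 2), 0]) :
    ∀ x : V3,
      (N - 2 * α) / (1 + ∑ i, x i ^ 2) ^ α
        ≤ Real.sqrt (∑ i, curl3 (fun y k => φ y * BN y k) x i ^ 2) ∧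
      0 < (N - 2 * α) / (1 + ∑ i, x i ^ 2) ^ α := by
  subst hBN
  intro x
  have hQ0 : (0:ℝ) ≤ ∑ i, x i ^ 2 :=
    Finset.sum_nonneg (fun i _ => sq_nonneg _)
  set t : ℝ := 1 + ∑ i, x i ^ 2 with ht_def
  have ht1 : (1:ℝ) ≤ t := by simp [ht_def]; linarith
  have ht0 : (0:ℝ) < t := by linarith
  have hNpos : (0:ℝ) < N := by linarith
  have hαpos : (0:ℝ) < α := by linarith
  -- derivative of φ
  set S : V3 →L[ℝ] ℝ := ∑ i : Fin 3, (2 * x i) • pr3 i with hS_def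
  set d : ℝ := -α * t ^ (-α - 1) with hd_def
  have hφd : HasFDerivAt φ (d • S) x := by
    rw [hφ]
    have h1 : ∀ i : Fin 3, HasFDerivAt (fun y : V3 => y i ^ 2) ((2 * x i) • pr3 i) x := by
      intro i
      have h := ((pr3 i).hasFDerivAt (x := x)).mul ((pr3 i).hasFDerivAt (x := x))
      simp only [ContinuousLinearMap.proj_apply] at h
      have e1 : (fun y : V3 => y i * y i) = fun y : V3 => y i ^ 2 := by funext y; ring
      change HasFDerivAt (fun y : V3 => y i * y i) _ x at h
      rw [e1] at h
      rw [two_mul, add_smul]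
      exact h
    have hs := (HasFDerivAt.sum (fun i (_ : i ∈ Finset.univ) => h1 i)).const_add 1
    exact hs.rpow_const (Or.inl ht0.ne')
  set θ : ℝ := N * x 2 with hθ_def
  have hlin : HasFDerivAt (fun y : V3 => N * y 2) (N • pr3 2) x := by
    have := ((pr3 2).hasFDerivAt (x := x)).const_mul N
    simpa using this
  have hsin : HasFDerivAt (fun y : V3 => Real.sin (N * y 2)) (Real.cos θ • (N • pr3 2)) x :=
    ((Real.hasDerivAt_sin (N * x 2)).comp_hasFDerivAt x hlin :)
  have hcos : HasFDerivAt (fun y : V3 => Real.cos (N * y 2)) ((-Real.sin θ) • (N • pr3 2)) x :=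
    ((Real.hasDerivAt_cos (N * x 2)).comp_hasFDerivAt x hlin :)
  have hf0 := hφd.mul hsin
  have hf1 := hφd.mul hcos
  have hpd : ∀ (j : Fin 3) (f : V3 → ℝ) (f' : V3 →L[ℝ] ℝ), HasFDerivAt f f' x →
      pd j f x = f' (Pi.single j 1) := by
    intro j f f' h
    simp [pd, h.fderiv]
  have hφx : φ x = t ^ (-α) := by rw [hφ]
  set g : ℝ := t ^ (-α) with hg_def
  -- the six partial derivatives
  have p10 : pd 1 (fun y => φ y * Real.sin (N * y 2)) x = Real.sin θ * (d * (2 * x 1)) := by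
    rw [hpd _ (fun y => φ y * Real.sin (N * y 2)) _ hf0]
    simp [hS_def, Fin.sum_univ_three, Pi.single_apply]
    exact Or.inl rfl
  have p20 : pd 2 (fun y => φ y * Real.sin (N * y 2)) x
      = g * (Real.cos θ * N) + Real.sin θ * (d * (2 * x 2)) := by
    rw [hpd _ (fun y => φ y * Real.sin (N * y 2)) _ hf0]
    simp [hS_def, Fin.sum_univ_three, Pi.single_apply, hφx]
    exact Or.inl rfl
  have p01 : pd 0 (fun y => φ y * Real.cos (N * y 2)) x = Real.cos θ * (d * (2 * x 0)) := by
    rw [hpd _ (fun y => φ y * Real.cos (N * y 2)) _ hf1]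
    simp [hS_def, Fin.sum_univ_three, Pi.single_apply]
    exact Or.inl rfl
  have p21 : pd 2 (fun y => φ y * Real.cos (N * y 2)) x
      = g * (-Real.sin θ * N) + Real.cos θ * (d * (2 * x 2)) := by
    rw [hpd _ (fun y => φ y * Real.cos (N * y 2)) _ hf1]
    simp [hS_def, Fin.sum_univ_three, Pi.single_apply, hφx]
    exact Or.inl rfl
  have pz : ∀ j : Fin 3, pd j (fun _ : V3 => (0:ℝ)) x = 0 := by
    intro j; simp [pd]
  -- the curl components
  have hcurl : ∑ i, curl3 (fun y k => φ y * ![Real.sin (N * y 2), Real.cos (N * y 2), 0] k) x i ^ 2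
      = ((N*g*Real.sin θ + -(Real.cos θ * (d * (2 * x 2))))^2
        + (N*g*Real.cos θ + Real.sin θ * (d * (2 * x 2)))^2
        + ((0:ℝ) + (Real.cos θ * (d * (2 * x 0)) - Real.sin θ * (d * (2 * x 1))))^2) := by
    rw [Fin.sum_univ_three]
    simp only [curl3, Matrix.cons_val_zero, Matrix.cons_val_one, Matrix.head_cons,
      Matrix.cons_val_two, Matrix.tail_cons, mul_zero]
    rw [p10, p20, p01, p21, pz, pz]
    ring
  rw [hcurl]
  constructor
  · -- main inequality
    have hmain := norm3_lower (N*g*Real.sin θ) (N*g*Real.cos θ) 0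
      (-(Real.cos θ * (d * (2 * x 2)))) (Real.sin θ * (d * (2 * x 2)))
      (Real.cos θ * (d * (2 * x 0)) - Real.sin θ * (d * (2 * x 1)))
    have hgpos : (0:ℝ) < g := Real.rpow_pos_of_pos ht0 _
    have hsqA : Real.sqrt ((N*g*Real.sin θ)^2 + (N*g*Real.cos θ)^2 + (0:ℝ)^2) = N * g := by
      have e : (N*g*Real.sin θ)^2 + (N*g*Real.cos θ)^2 + (0:ℝ)^2 = (N*g)^2 := by
        have hpy := Real.sin_sq_add_cos_sq θ
        nlinarith [hpy]
      rw [e, Real.sqrt_sq (by positivity)]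
    have hsqB : Real.sqrt ((-(Real.cos θ * (d * (2 * x 2))))^2
        + (Real.sin θ * (d * (2 * x 2)))^2
        + (Real.cos θ * (d * (2 * x 0)) - Real.sin θ * (d * (2 * x 1)))^2) ≤ 2 * α * g := by
      have hpy := Real.sin_sq_add_cos_sq θ
      have hcross : (-(Real.cos θ * (d * (2 * x 2))))^2
          + (Real.sin θ * (d * (2 * x 2)))^2
          + (Real.cos θ * (d * (2 * x 0)) - Real.sin θ * (d * (2 * x 1)))^2
          ≤ (2*d)^2 * ((x 0)^2 + (x 1)^2 + (x 2)^2) := by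
        nlinarith [sq_nonneg (x 0 * Real.sin θ + x 1 * Real.cos θ), sq_nonneg (2*d)]
      have hQt : (x 0)^2 + (x 1)^2 + (x 2)^2 = t - 1 := by
        rw [ht_def, Fin.sum_univ_three]; ring
      have hr1 : (t ^ (-α - 1))^2 = t ^ (2*(-α - 1)) := by
        rw [← Real.rpow_natCast (t ^ (-α-1)) 2, ← Real.rpow_mul ht0.le]
        norm_num; ring_nf
      have hr2 : t ^ (2*(-α-1)) * t = t ^ (2*(-α-1)+1) := by
        rw [Real.rpow_add ht0, Real.rpow_one]
      have hr3 : t ^ (2*(-α-1)+1) ≤ t ^ (2*(-α)) :=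
        Real.rpow_le_rpow_of_exponent_le ht1 (by linarith)
      have hr4 : (g)^2 = t ^ (2*(-α)) := by
        rw [hg_def, ← Real.rpow_natCast (t ^ (-α)) 2, ← Real.rpow_mul ht0.le]
        norm_num; ring_nf
      have hd2 : (2*d)^2 * ((x 0)^2 + (x 1)^2 + (x 2)^2) ≤ (2*α*g)^2 := by
        rw [hQt, hd_def]
        have hrpos : (0:ℝ) < t ^ (-α-1) := Real.rpow_pos_of_pos ht0 _
        calc (2*(-α * t^(-α-1)))^2 * (t-1) = 4*α^2 * ((t^(-α-1))^2 * (t-1)) := by ring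
          _ ≤ 4*α^2 * (t ^ (2*(-α-1)) * t) := by
              rw [hr1]
              have : t ^ (2*(-α-1)) * (t-1) ≤ t ^ (2*(-α-1)) * t := by
                apply mul_le_mul_of_nonneg_left (by linarith) (le_of_lt (Real.rpow_pos_of_pos ht0 _))
              nlinarith [this, sq_nonneg α]
          _ ≤ 4*α^2 * t ^ (2*(-α)) := by
              rw [hr2]
              exact mul_le_mul_of_nonneg_left hr3 (by positivity)
          _ = (2*α*g)^2 := by rw [← hr4]; ring
      have h5 := Real.sqrt_le_sqrt (le_trans hcross hd2)
      rwa [Real.sqrt_sq (by positivity : (0:ℝ) ≤ 2*α*g)] at h5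
    have hdivg : (N - 2 * α) / t ^ α = (N - 2*α) * g := by
      rw [hg_def, Real.rpow_neg ht0.le, div_eq_mul_inv]
    rw [hdivg]
    rw [hsqA] at hmain
    clear hφ hφd hsin hcos hf0 hf1 hpd hcurl hlin pz p10 p20 p01 p21 hφx hdivg hsqA
    clear hS_def hd_def hg_def hθ_def ht_def hQ0
    clear_value S d θ g t
    linarith [hmain, hsqB]
  · exact div_pos (sub_pos.2 hN) (Real.rpow_pos_of_pos ht0 α)

end
end
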